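/- Let q ≥ 2 be even, let p_k ≥ 0 for k ∈ {−q/2, …, −1, 1, …, q/2} with ∑_k p_k = 1, and let W be the binary input symmetric q-ary output kernel with output alphabet K. Let X be a random variable with finitely many values, Y a random variable taking finitely many values in lists over {−1,+1}, and Y^(q) a random variable taking values in lists over K with |Y^(q)| = |Y| pointwise, such that P(Y^(q)=y′ | X=x, Y=y) = ∏_{i=1}^{|y|} W(y_i, y′_i) whenever P(X=x, Y=y) > 0 and |y′| = |y|. Then I(X; Y^(q)) ≥ I(X; Y) − E[|Y|] · [ H(p_{−q/2}, …, p_{−1}, p_1, …, p_{q/2}) + log₂( ∑_{k=1}^{q/2} (p_k + p_{−k})² ) ], where H(p_{−q/2}, …, p_{−1}, p_1, …, p_{q/2}) = −∑_k p_k log₂ p_k. -/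

import Mathlib

open scoped BigOperators
open Classical

noncomputable section

/-- A finite probability space: a probability mass function on a finite type. -/
structure FinProb (Ω : Type*) [Fintype Ω] where
  p : Ω → ℝ
  nonneg : ∀ ω, 0 ≤ p ω
  sum_one : ∑ ω, p ω = 1

variable {Ω : Type*} [Fintype Ω]

/-- Probability of an event. -/
def pr (μ : FinProb Ω) (E : Ω → Prop) : ℝ :=
  ∑ ω, if E ω then μ.p ω else 0

/-- Shannon entropy (base 2) of a random variable with finitely many values. -/
def entropy {S : Type*} (μ : FinProb Ω) (U : Ω → S) : ℝ :=
  -∑ u ∈ Finset.univ.image U,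
    pr μ (fun ω => U ω = u) * Real.logb 2 (pr μ (fun ω => U ω = u))

/-- Conditional Shannon entropy `H(U | V)`. -/
def condEntropy {S T : Type*} (μ : FinProb Ω) (U : Ω → S) (V : Ω → T) : ℝ :=
  ∑ v ∈ (Finset.univ.image V).filter (fun v => 0 < pr μ (fun ω => V ω = v)),
    pr μ (fun ω => V ω = v) *
      (-∑ u ∈ Finset.univ.image U,
        (pr μ (fun ω => U ω = u ∧ V ω = v) / pr μ (fun ω => V ω = v)) *
          Real.logb 2 (pr μ (fun ω => U ω = u ∧ V ω = v) / pr μ (fun ω => V ω = v)))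

/-- Mutual information `I(U;V) = H(U) - H(U|V)`. -/
def mutualInfo {S T : Type*} (μ : FinProb Ω) (U : Ω → S) (V : Ω → T) : ℝ :=
  entropy μ U - condEntropy μ U V

/-- Expected length of a list-valued random variable. -/
def expLen {A : Type*} (μ : FinProb Ω) (Y : Ω → List A) : ℝ :=
  ∑ ω, μ.p ω * (Y ω).length

/-- For even `q`, the output alphabet `K = {−q/2, …, −1, 1, …, q/2} ⊆ ℤ`. -/
def Keven (q : ℕ) : Finset ℤ :=
  (Finset.Icc (-((q / 2 : ℕ) : ℤ)) ((q / 2 : ℕ) : ℤ)).erase 0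

/-- The input alphabet `{−1, +1} ⊆ ℤ`. -/
def pmOne : Finset ℤ := {-1, 1}

/-!
Let `ρ(b, k) = p_{k b} / (p_k + p_{-k})` be the posterior probability of the input `b` of `W` given
the output `k` under a uniform input, and `G(y, y') = ∏ᵢ ρ(yᵢ, y'ᵢ)` (zero if the lengths differ).
Since `∑_y G(y, y') ≤ 1`, `Q(x, y') = ∑_y P(X = x | Y = y) G(y, y')` is sub-stochastic, and Gibbs'
inequality (Jensen for `log₂`) gives
`H(X | Y⁽q⁾) ≤ E[-log₂ Q(X, Y⁽q⁾)] ≤ H(X | Y) + E[-log₂ G(Y, Y⁽q⁾)]`.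
As the channel is memoryless, the last expectation is `E[|Y|]` times the equivocation
`H(p) + ∑_k p_k log₂(p_k + p_{-k})` of `W`, and Jensen once more bounds
`∑_k p_k log₂(p_k + p_{-k}) ≤ log₂ ∑_k p_k (p_k + p_{-k}) = log₂ ∑_{k=1}^{q/2} (p_k + p_{-k})²`.
-/

lemma sum_mul_logb_le_logb_sum_mul {ι : Type*} (s : Finset ι) {a r : ι → ℝ}
    (ha : ∀ i ∈ s, 0 ≤ a i) (ha1 : ∑ i ∈ s, a i = 1) (hr : ∀ i ∈ s, 0 < a i → 0 < r i) :
    ∑ i ∈ s, a i * Real.logb 2 (r i) ≤ Real.logb 2 (∑ i ∈ s, a i * r i) := by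
  have hsupp : ∀ f : ι → ℝ, ∑ i ∈ s with 0 < a i, a i * f i = ∑ i ∈ s, a i * f i :=
    fun f => Finset.sum_filter_of_ne fun i hi hne =>
      (ha i hi).lt_of_ne' fun h => hne (by rw [h, zero_mul])
  have hjensen := strictConcaveOn_log_Ioi.concaveOn.le_map_sum
    (t := s.filter (0 < a ·)) (w := a) (p := r)
    (fun i hi => (ha i (Finset.mem_filter.1 hi).1)) (by simpa [ha1] using hsupp fun _ => 1)
    (fun i hi => hr i (Finset.mem_filter.1 hi).1 (Finset.mem_filter.1 hi).2)
  simp only [smul_eq_mul, hsupp] at hjensen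
  simp only [Real.logb, ← mul_div_assoc, ← Finset.sum_div]
  exact div_le_div_of_nonneg_right hjensen (Real.log_nonneg one_le_two)

lemma sum_prod_mul_sum {ι α : Type*} [Fintype ι] [DecidableEq ι] [Fintype α] (w f : ι → α → ℝ)
    (hw : ∀ i, ∑ x, w i x = 1) :
    ∑ z : ι → α, (∏ i, w i (z i)) * ∑ i, f i (z i) = ∑ i, ∑ x, w i x * f i x := by
  simp only [Finset.mul_sum]
  rw [Finset.sum_comm]
  refine Finset.sum_congr rfl fun i _ => ?_
  have hfactor : ∀ z : ι → α, (∏ j, w j (z j)) * f i (z i) =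
      ∏ j, w j (z j) * (if j = i then f j (z j) else 1) := fun z => by
    rw [Finset.prod_mul_distrib, Finset.prod_ite_eq']
    simp
  rw [Finset.sum_congr rfl fun z _ => hfactor z,
    ← Fintype.prod_sum fun j x => w j x * if j = i then f j x else 1]
  simp only [mul_ite, mul_one, Finset.sum_ite_irrel, hw, Finset.prod_ite_eq', Finset.mem_univ,
    if_true]

lemma exists_ofFn_eq_of_length_eq {α : Type*} {l : List α} {n : ℕ} (h : l.length = n) :
    ∃ f : Fin n → α, List.ofFn f = l := by
  subst h
  exact ⟨l.get, List.ofFn_get l⟩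

namespace FinProb

variable (μ : FinProb Ω)

lemma pr_nonneg (E : Ω → Prop) : 0 ≤ pr μ E :=
  Finset.sum_nonneg fun ω _ => by split_ifs <;> simp [μ.nonneg ω]

lemma pr_eq_zero {E : Ω → Prop} (h : ∀ ω, ¬E ω) : pr μ E = 0 :=
  Finset.sum_eq_zero fun ω _ => if_neg (h ω)

variable {μ} in
lemma pr_mono {E F : Ω → Prop} (h : ∀ ω, E ω → F ω) : pr μ E ≤ pr μ F :=
  Finset.sum_le_sum fun ω _ => by
    by_cases hE : E ω
    · simp [hE, h ω hE]
    · split_ifs <;> simp [μ.nonneg ω]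

variable {μ} in
lemma le_pr {E : Ω → Prop} {ω : Ω} (hω : E ω) : μ.p ω ≤ pr μ E := by
  simpa [pr, hω] using Finset.single_le_sum (f := fun ω' => if E ω' then μ.p ω' else 0)
    (fun ω' _ => by split_ifs <;> simp [μ.nonneg ω']) (Finset.mem_univ ω)

variable {μ} in
lemma exists_pos_of_pr_pos {E : Ω → Prop} (h : 0 < pr μ E) : ∃ ω, 0 < μ.p ω ∧ E ω := by
  by_contra! hc
  refine h.not_ge (Finset.sum_nonpos fun ω _ => ?_)
  split_ifs with hE
  · exact hc ω |>.mt (not_not.mpr hE) |> not_lt.mp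
  · rfl

lemma pr_eq_sum_pr_and {T : Type*} (E : Ω → Prop) (V : Ω → T) :
    pr μ E = ∑ v ∈ Finset.univ.image V, pr μ (fun ω => V ω = v ∧ E ω) := by
  unfold pr
  rw [Finset.sum_comm]
  refine Finset.sum_congr rfl fun ω _ => ?_
  by_cases hE : E ω <;> simp [hE]

lemma sum_pr_mul {S : Type*} (U : Ω → S) (f : S → ℝ) :
    ∑ u ∈ Finset.univ.image U, pr μ (fun ω => U ω = u) * f u = ∑ ω, μ.p ω * f (U ω) := by
  simp only [pr, Finset.sum_mul, ite_mul, zero_mul]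
  rw [Finset.sum_comm]
  refine Finset.sum_congr rfl fun ω _ => ?_
  simp

lemma sum_sum_pr_mul {S T : Type*} (U : Ω → S) (V : Ω → T) (f : S → T → ℝ) :
    ∑ u ∈ Finset.univ.image U, ∑ v ∈ Finset.univ.image V,
      pr μ (fun ω => U ω = u ∧ V ω = v) * f u v = ∑ ω, μ.p ω * f (U ω) (V ω) := by
  simp only [pr, Finset.sum_mul, ite_mul, zero_mul, ite_and]
  rw [Finset.sum_congr rfl fun u _ => Finset.sum_comm, Finset.sum_comm]
  refine Finset.sum_congr rfl fun ω _ => ?_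
  simp

lemma sum_pr_eq_one {S : Type*} (U : Ω → S) :
    ∑ u ∈ Finset.univ.image U, pr μ (fun ω => U ω = u) = 1 := by
  simpa [μ.sum_one] using sum_pr_mul μ U fun _ => 1

def condProb {S T : Type*} (U : Ω → S) (V : Ω → T) (u : S) (v : T) : ℝ :=
  pr μ (fun ω => U ω = u ∧ V ω = v) / pr μ (fun ω => V ω = v)

section CondProb

variable {S T : Type*} (U : Ω → S) (V : Ω → T)

lemma condProb_nonneg (u : S) (v : T) : 0 ≤ μ.condProb U V u v :=
  div_nonneg (μ.pr_nonneg _) (μ.pr_nonneg _)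

variable {μ} in
lemma condProb_pos {ω : Ω} (hω : 0 < μ.p ω) : 0 < μ.condProb U V (U ω) (V ω) :=
  div_pos (hω.trans_le (le_pr ⟨rfl, rfl⟩)) (hω.trans_le (le_pr rfl))

lemma sum_condProb_le_one (v : T) : ∑ u ∈ Finset.univ.image U, μ.condProb U V u v ≤ 1 := by
  simp only [condProb]
  rw [← Finset.sum_div, ← pr_eq_sum_pr_and]
  exact div_self_le_one _

lemma pr_mul_div_condProb_le (u : S) (v : T) {c : ℝ} (hc : 0 ≤ c) :
    pr μ (fun ω => U ω = u ∧ V ω = v) * (c / μ.condProb U V u v) ≤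
      pr μ (fun ω => V ω = v) * c := by
  rcases (μ.pr_nonneg fun ω => U ω = u ∧ V ω = v).eq_or_lt with h0 | hpos
  · rw [← h0, zero_mul]
    exact mul_nonneg (μ.pr_nonneg _) hc
  · have hV : 0 < pr μ (fun ω => V ω = v) := hpos.trans_le (pr_mono fun ω h => h.2)
    exact le_of_eq (by rw [condProb]; field_simp)

lemma condEntropy_eq_sum :
    condEntropy μ U V = ∑ ω, μ.p ω * -Real.logb 2 (μ.condProb U V (U ω) (V ω)) := by
  rw [← sum_sum_pr_mul μ U V fun u v => -Real.logb 2 (μ.condProb U V u v), Finset.sum_comm,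
    condEntropy, Finset.sum_filter]
  refine Finset.sum_congr rfl fun v _ => ?_
  split_ifs with hV
  · simp only [Finset.mul_sum, ← Finset.sum_neg_distrib, mul_neg]
    refine Finset.sum_congr rfl fun u _ => ?_
    rw [condProb]
    field_simp
  · refine (Finset.sum_eq_zero fun u _ => ?_).symm
    have h0 : pr μ (fun ω => U ω = u ∧ V ω = v) = 0 :=
      ((pr_mono fun ω h => h.2).trans (not_lt.1 hV)).antisymm (μ.pr_nonneg _)
    rw [h0, zero_mul]

end CondProb

lemma sum_mul_div_condProb_le_one {S T : Type*} (X : Ω → S) (V : Ω → T) {Q : S → T → ℝ}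
    (hQ0 : ∀ x v, 0 ≤ Q x v) (hQ1 : ∀ v, ∑ x ∈ Finset.univ.image X, Q x v ≤ 1) :
    ∑ ω, μ.p ω * (Q (X ω) (V ω) / μ.condProb X V (X ω) (V ω)) ≤ 1 := by
  rw [← sum_sum_pr_mul μ X V fun x v => Q x v / μ.condProb X V x v]
  calc _ ≤ ∑ x ∈ Finset.univ.image X, ∑ v ∈ Finset.univ.image V,
        pr μ (fun ω => V ω = v) * Q x v :=
        Finset.sum_le_sum fun x _ => Finset.sum_le_sum fun v _ =>
          μ.pr_mul_div_condProb_le X V x v (hQ0 x v)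
    _ = ∑ v ∈ Finset.univ.image V,
        pr μ (fun ω => V ω = v) * ∑ x ∈ Finset.univ.image X, Q x v := by
        rw [Finset.sum_comm]
        simp only [Finset.mul_sum]
    _ ≤ ∑ v ∈ Finset.univ.image V, pr μ (fun ω => V ω = v) :=
        Finset.sum_le_sum fun v _ => mul_le_of_le_one_right (μ.pr_nonneg _) (hQ1 v)
    _ = 1 := μ.sum_pr_eq_one V

lemma condEntropy_le_sum_neg_logb {S T : Type*} (X : Ω → S) (V : Ω → T) {Q : S → T → ℝ}
    (hQ0 : ∀ x v, 0 ≤ Q x v) (hQ1 : ∀ v, ∑ x ∈ Finset.univ.image X, Q x v ≤ 1)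
    (hQpos : ∀ ω, 0 < μ.p ω → 0 < Q (X ω) (V ω)) :
    condEntropy μ X V ≤ ∑ ω, μ.p ω * -Real.logb 2 (Q (X ω) (V ω)) := by
  have hjensen := sum_mul_logb_le_logb_sum_mul Finset.univ (fun ω _ => μ.nonneg ω) μ.sum_one
    (r := fun ω => Q (X ω) (V ω) / μ.condProb X V (X ω) (V ω))
    fun ω _ hω => div_pos (hQpos ω hω) (condProb_pos X V hω)
  have hlog := Real.logb_nonpos one_lt_two (Finset.sum_nonneg fun ω _ => mul_nonneg (μ.nonneg ω)
    (div_nonneg (hQ0 _ _) (μ.condProb_nonneg X V _ _))) (μ.sum_mul_div_condProb_le_one X V hQ0 hQ1)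
  have hsplit : ∀ ω, μ.p ω * -Real.logb 2 (μ.condProb X V (X ω) (V ω)) =
      μ.p ω * -Real.logb 2 (Q (X ω) (V ω)) +
        μ.p ω * Real.logb 2 (Q (X ω) (V ω) / μ.condProb X V (X ω) (V ω)) := fun ω => by
    rcases (μ.nonneg ω).eq_or_lt with h0 | hω
    · simp [← h0]
    · rw [Real.logb_div (hQpos ω hω).ne' (condProb_pos X V hω).ne']
      ring
  rw [condEntropy_eq_sum]
  simp only [hsplit, Finset.sum_add_distrib]
  linarith

lemma condEntropy_le_condEntropy_add {S T U : Type*} (X : Ω → S) (Y : Ω → T) (V : Ω → U)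
    {G : T → U → ℝ} (hG0 : ∀ y v, 0 ≤ G y v) (hG1 : ∀ v, ∑ y ∈ Finset.univ.image Y, G y v ≤ 1)
    (hGpos : ∀ ω, 0 < μ.p ω → 0 < G (Y ω) (V ω)) :
    condEntropy μ X V ≤ condEntropy μ X Y + ∑ ω, μ.p ω * -Real.logb 2 (G (Y ω) (V ω)) := by
  have hterm_nonneg : ∀ x y v, 0 ≤ μ.condProb X Y x y * G y v :=
    fun x y v => mul_nonneg (μ.condProb_nonneg X Y x y) (hG0 y v)
  have hterm_le : ∀ ω, μ.condProb X Y (X ω) (Y ω) * G (Y ω) (V ω) ≤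
      ∑ y ∈ Finset.univ.image Y, μ.condProb X Y (X ω) y * G y (V ω) :=
    fun ω => Finset.single_le_sum (f := fun y => μ.condProb X Y (X ω) y * G y (V ω))
      (fun y _ => hterm_nonneg _ y _) (Finset.mem_image_of_mem Y (Finset.mem_univ ω))
  have hpos : ∀ ω, 0 < μ.p ω → 0 < μ.condProb X Y (X ω) (Y ω) * G (Y ω) (V ω) :=
    fun ω hω => mul_pos (condProb_pos X Y hω) (hGpos ω hω)
  refine (μ.condEntropy_le_sum_neg_logb X V (fun x v => Finset.sum_nonneg fun y _ =>
    hterm_nonneg x y v) (fun v => ?_) fun ω hω => (hpos ω hω).trans_le (hterm_le ω)).trans ?_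
  · rw [Finset.sum_comm]
    refine (Finset.sum_le_sum fun y _ => ?_).trans (hG1 v)
    rw [← Finset.sum_mul]
    exact mul_le_of_le_one_left (hG0 y v) (μ.sum_condProb_le_one X Y y)
  rw [condEntropy_eq_sum, ← Finset.sum_add_distrib]
  refine Finset.sum_le_sum fun ω _ => ?_
  rcases (μ.nonneg ω).eq_or_lt with h0 | hω
  · simp [← h0]
  rw [← mul_add, ← neg_add, ← Real.logb_mul (condProb_pos X Y hω).ne' (hGpos ω hω).ne']
  exact mul_le_mul_of_nonneg_left (neg_le_neg <|
    Real.logb_le_logb_of_le one_lt_two (hpos ω hω) (hterm_le ω)) hω.le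

end FinProb

lemma mem_Keven {q : ℕ} {k : ℤ} :
    k ∈ Keven q ↔ k ≠ 0 ∧ -((q / 2 : ℕ) : ℤ) ≤ k ∧ k ≤ (q / 2 : ℕ) := by
  simp [Keven]

lemma neg_mem_Keven {q : ℕ} {k : ℤ} (hk : k ∈ Keven q) : -k ∈ Keven q := by
  rw [mem_Keven] at hk ⊢
  omega

lemma mem_pmOne {b : ℤ} : b ∈ pmOne ↔ b = -1 ∨ b = 1 := by
  simp [pmOne]

lemma mul_mem_Keven {q : ℕ} {k b : ℤ} (hk : k ∈ Keven q) (hb : b ∈ pmOne) : k * b ∈ Keven q := by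
  rcases mem_pmOne.1 hb with rfl | rfl
  · simpa using neg_mem_Keven hk
  · simpa using hk

lemma sum_Keven_neg {M : Type*} [AddCommMonoid M] (q : ℕ) (f : ℤ → M) :
    ∑ k ∈ Keven q, f (-k) = ∑ k ∈ Keven q, f k :=
  Finset.sum_nbij' Neg.neg Neg.neg (fun _ => neg_mem_Keven) (fun _ => neg_mem_Keven)
    (fun k _ => neg_neg k) (fun k _ => neg_neg k) (fun _ _ => rfl)

lemma sum_Keven_eq_sum_Icc {M : Type*} [AddCommMonoid M] (q : ℕ) (f : ℤ → M) :
    ∑ k ∈ Keven q, f k = ∑ k ∈ Finset.Icc (1 : ℤ) (q / 2 : ℕ), (f k + f (-k)) := by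
  have hsplit : Keven q = Finset.Icc (1 : ℤ) (q / 2 : ℕ) ∪ (Finset.Icc (1 : ℤ) (q / 2 : ℕ)).map
      (Equiv.neg ℤ).toEmbedding := by
    ext k
    simp only [mem_Keven, Finset.mem_union, Finset.mem_map_equiv, Equiv.neg_symm,
      Equiv.neg_apply, Finset.mem_Icc]
    omega
  rw [hsplit, Finset.sum_union, Finset.sum_map, ← Finset.sum_add_distrib]
  · rfl
  · rw [Finset.disjoint_left]
    intro k hk hk'
    simp only [Finset.mem_map_equiv, Equiv.neg_symm, Equiv.neg_apply, Finset.mem_Icc] at hk hk'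
    omega

lemma sum_Keven_mul {M : Type*} [AddCommMonoid M] (q : ℕ) {b : ℤ} (hb : b ∈ pmOne) (f : ℤ → M) :
    ∑ k ∈ Keven q, f (k * b) = ∑ k ∈ Keven q, f k := by
  rcases mem_pmOne.1 hb with rfl | rfl
  · simpa using sum_Keven_neg q f
  · simp

def posterior (p : ℤ → ℝ) (b k : ℤ) : ℝ := p (k * b) / (p k + p (-k))

/-- The conditional entropy of the input of `W` given its output, for a uniform input. -/
def equivocation (q : ℕ) (p : ℤ → ℝ) : ℝ :=
  -∑ k ∈ Keven q, p k * Real.logb 2 (p k) + ∑ k ∈ Keven q, p k * Real.logb 2 (p k + p (-k))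

section Posterior

variable {q : ℕ} {p : ℤ → ℝ}

lemma le_add_neg_of_mem (hp0 : ∀ k ∈ Keven q, 0 ≤ p k) {k b : ℤ} (hk : k ∈ Keven q)
    (hb : b ∈ pmOne) : p (k * b) ≤ p k + p (-k) := by
  rcases mem_pmOne.1 hb with rfl | rfl
  · simpa using hp0 k hk
  · simpa using hp0 (-k) (neg_mem_Keven hk)

lemma posterior_nonneg (hp0 : ∀ k ∈ Keven q, 0 ≤ p k) {k b : ℤ} (hk : k ∈ Keven q)
    (hb : b ∈ pmOne) : 0 ≤ posterior p b k :=
  div_nonneg (hp0 _ (mul_mem_Keven hk hb)) (add_nonneg (hp0 k hk) (hp0 _ (neg_mem_Keven hk)))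

lemma posterior_pos (hp0 : ∀ k ∈ Keven q, 0 ≤ p k) {k b : ℤ} (hk : k ∈ Keven q)
    (hb : b ∈ pmOne) (h : 0 < p (k * b)) : 0 < posterior p b k :=
  div_pos h (h.trans_le (le_add_neg_of_mem hp0 hk hb))

lemma sum_posterior_le_one (p : ℤ → ℝ) (k : ℤ) : ∑ b ∈ pmOne, posterior p b k ≤ 1 := by
  rw [pmOne, Finset.sum_pair (by norm_num), posterior, posterior, ← add_div]
  simpa [add_comm] using div_self_le_one (p k + p (-k))

lemma sum_mul_neg_logb_posterior (hp0 : ∀ k ∈ Keven q, 0 ≤ p k) {b : ℤ} (hb : b ∈ pmOne) :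
    ∑ k ∈ Keven q, p (k * b) * -Real.logb 2 (posterior p b k) = equivocation q p := by
  have hterm : ∀ k ∈ Keven q, p (k * b) * -Real.logb 2 (posterior p b k) =
      -(p (k * b) * Real.logb 2 (p (k * b))) + p (k * b) * Real.logb 2 (p k + p (-k)) := by
    intro k hk
    rcases (hp0 _ (mul_mem_Keven hk hb)).eq_or_lt with h0 | hpos
    · simp [← h0]
    · rw [posterior, Real.logb_div hpos.ne' (hpos.trans_le (le_add_neg_of_mem hp0 hk hb)).ne']
      ring
  rw [Finset.sum_congr rfl hterm, Finset.sum_add_distrib, Finset.sum_neg_distrib, equivocation]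
  rcases mem_pmOne.1 hb with rfl | rfl
  · simp only [mul_neg_one]
    rw [sum_Keven_neg q fun k => p k * Real.logb 2 (p k),
      ← sum_Keven_neg q fun k => p k * Real.logb 2 (p k + p (-k))]
    simp [add_comm]
  · simp

end Posterior

def seqPosterior {q : ℕ} (p : ℤ → ℝ) (y : List pmOne) (v : List (Keven q)) : ℝ :=
  if y.length = v.length then
    (List.zipWith (fun (b : pmOne) (k : Keven q) => posterior p b k) y v).prod
  else 0

section SeqPosterior

variable {q : ℕ} {p : ℤ → ℝ}

lemma seqPosterior_ofFn {n : ℕ} (a : Fin n → pmOne) (b : Fin n → Keven q) :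
    seqPosterior p (List.ofFn a) (List.ofFn b) = ∏ i, posterior p (a i) (b i) := by
  have hzip : List.zipWith (fun (β : pmOne) (k : Keven q) => posterior p β k) (List.ofFn a)
      (List.ofFn b) = List.ofFn fun i => posterior p (a i) (b i) :=
    List.ext_getElem (by simp) fun i _ _ => by simp
  rw [seqPosterior, if_pos (by simp), hzip, List.prod_ofFn]

lemma seqPosterior_nonneg (hp0 : ∀ k ∈ Keven q, 0 ≤ p k) (y : List pmOne) (v : List (Keven q)) :
    0 ≤ seqPosterior p y v := by
  by_cases h : y.length = v.length
  · generalize hn : v.length = n at h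
    obtain ⟨a, rfl⟩ := exists_ofFn_eq_of_length_eq h
    obtain ⟨b, rfl⟩ := exists_ofFn_eq_of_length_eq hn
    rw [seqPosterior_ofFn]
    exact Finset.prod_nonneg fun i _ => posterior_nonneg hp0 (b i).2 (a i).2
  · simp [seqPosterior, h]

lemma sum_seqPosterior_le_one (hp0 : ∀ k ∈ Keven q, 0 ≤ p k) (t : Finset (List pmOne))
    (v : List (Keven q)) : ∑ y ∈ t, seqPosterior p y v ≤ 1 := by
  obtain ⟨n, b, rfl⟩ : ∃ n, ∃ b : Fin n → Keven q, List.ofFn b = v :=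
    ⟨_, exists_ofFn_eq_of_length_eq rfl⟩
  calc ∑ y ∈ t, seqPosterior p y (List.ofFn b)
      = ∑ y ∈ t with y.length = n, seqPosterior p y (List.ofFn b) :=
        (Finset.sum_filter_of_ne fun y _ hne =>
          by_contra fun h => hne (by simp [seqPosterior, h])).symm
    _ ≤ ∑ y ∈ (Finset.univ : Finset (Fin n → pmOne)).image List.ofFn,
          seqPosterior p y (List.ofFn b) := by
        refine Finset.sum_le_sum_of_subset_of_nonneg (fun y hy => ?_)
          fun y _ _ => seqPosterior_nonneg hp0 _ _
        obtain ⟨a, rfl⟩ := exists_ofFn_eq_of_length_eq (Finset.mem_filter.1 hy).2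
        exact Finset.mem_image_of_mem _ (Finset.mem_univ a)
    _ = ∏ i, ∑ β : pmOne, posterior p β (b i) := by
        rw [Finset.sum_image fun _ _ _ _ h => List.ofFn_injective h, Fintype.prod_sum]
        simp only [seqPosterior_ofFn]
    _ ≤ 1 := Finset.prod_le_one
        (fun i _ => Finset.sum_nonneg fun β _ => posterior_nonneg hp0 (b i).2 β.2)
        (fun i _ => (Finset.sum_coe_sort pmOne fun β => posterior p β (b i)).trans_le
          (sum_posterior_le_one p (b i)))

lemma posterior_pos_of_prod_pos (hp0 : ∀ k ∈ Keven q, 0 ≤ p k) {n : ℕ} {a : Fin n → pmOne}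
    {b : Fin n → Keven q} (h : 0 < ∏ i, p (b i * a i)) (i : Fin n) :
    0 < posterior p (a i) (b i) :=
  posterior_pos hp0 (b i).2 (a i).2 <| (hp0 _ (mul_mem_Keven (b i).2 (a i).2)).lt_of_ne
    fun h0 => h.ne' (Finset.prod_eq_zero (Finset.mem_univ i) h0.symm)

lemma sum_prod_mul_neg_logb_seqPosterior (hp0 : ∀ k ∈ Keven q, 0 ≤ p k)
    (hp1 : ∑ k ∈ Keven q, p k = 1) {n : ℕ} (a : Fin n → pmOne) :
    ∑ b : Fin n → Keven q, (∏ i, p (b i * a i)) *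
        -Real.logb 2 (seqPosterior p (List.ofFn a) (List.ofFn b)) = n * equivocation q p := by
  have hsplit : ∀ b : Fin n → Keven q, (∏ i, p (b i * a i)) *
      -Real.logb 2 (seqPosterior p (List.ofFn a) (List.ofFn b)) =
        (∏ i, p (b i * a i)) * ∑ i, -Real.logb 2 (posterior p (a i) (b i)) := fun b => by
    rcases (Finset.prod_nonneg (s := Finset.univ) fun i _ =>
      hp0 _ (mul_mem_Keven (b i).2 (a i).2)).eq_or_lt with h0 | hpos
    · simp [← h0]
    rw [seqPosterior_ofFn, Real.logb_prod _ _ fun i _ => (posterior_pos_of_prod_pos hp0 hpos i).ne',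
      Finset.sum_neg_distrib]
  rw [Finset.sum_congr rfl fun b _ => hsplit b,
    sum_prod_mul_sum (fun i (k : Keven q) => p (k * a i))
      (fun i k => -Real.logb 2 (posterior p (a i) k)) fun i => by
        rw [Finset.sum_coe_sort (Keven q) fun k => p (k * a i), sum_Keven_mul q (a i).2, hp1]]
  have hletter : ∀ i, ∑ k : Keven q, p (k * a i) * -Real.logb 2 (posterior p (a i) k) =
      equivocation q p :=
    fun i => (Finset.sum_coe_sort (Keven q) _).trans (sum_mul_neg_logb_posterior hp0 (a i).2)
  simp only [hletter, Finset.sum_const, Finset.card_univ, Fintype.card_fin, nsmul_eq_mul]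

end SeqPosterior

lemma equivocation_le {q : ℕ} {p : ℤ → ℝ} (hp0 : ∀ k ∈ Keven q, 0 ≤ p k)
    (hp1 : ∑ k ∈ Keven q, p k = 1) :
    equivocation q p ≤ -∑ k ∈ Keven q, p k * Real.logb 2 (p k) +
      Real.logb 2 (∑ k ∈ Finset.Icc (1 : ℤ) (q / 2 : ℕ), (p k + p (-k)) ^ 2) := by
  refine add_le_add le_rfl ((sum_mul_logb_le_logb_sum_mul (Keven q) hp0 hp1 fun k hk hpk =>
    add_pos_of_pos_of_nonneg hpk (hp0 _ (neg_mem_Keven hk))).trans_eq ?_)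
  rw [sum_Keven_eq_sum_Icc]
  congr 1
  refine Finset.sum_congr rfl fun k _ => ?_
  rw [neg_neg]
  ring

def IsChannelOutput {q : ℕ} (μ : FinProb Ω) (p : ℤ → ℝ) (Y : Ω → List pmOne)
    (Yq : Ω → List (Keven q)) : Prop :=
  ∀ (n : ℕ) (a : Fin n → pmOne) (b : Fin n → Keven q),
    pr μ (fun ω => Y ω = List.ofFn a ∧ Yq ω = List.ofFn b) =
      pr μ (fun ω => Y ω = List.ofFn a) * ∏ i, p (b i * a i)

namespace IsChannelOutput

variable {S : Type*} {μ : FinProb Ω} {q : ℕ} {p : ℤ → ℝ} {X : Ω → S} {Y : Ω → List pmOne}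
  {Yq : Ω → List (Keven q)}

lemma of_cond (hcond : ∀ (x : S) (n : ℕ) (y : Fin n → pmOne) (y' : Fin n → Keven q),
      0 < pr μ (fun ω => X ω = x ∧ Y ω = List.ofFn y) →
      pr μ (fun ω => Yq ω = List.ofFn y' ∧ X ω = x ∧ Y ω = List.ofFn y) /
        pr μ (fun ω => X ω = x ∧ Y ω = List.ofFn y) = ∏ i, p ((y' i : ℤ) * (y i : ℤ))) :
    IsChannelOutput μ p Y Yq := by
  intro n a b
  rw [μ.pr_eq_sum_pr_and _ X, μ.pr_eq_sum_pr_and _ X, Finset.sum_mul]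
  refine Finset.sum_congr rfl fun x _ => ?_
  rcases (μ.pr_nonneg fun ω => X ω = x ∧ Y ω = List.ofFn a).eq_or_lt with h0 | hpos
  · rw [← h0, zero_mul]
    exact ((FinProb.pr_mono fun ω h => ⟨h.1, h.2.1⟩).trans h0.ge).antisymm (μ.pr_nonneg _)
  · rw [← hcond x n a b hpos, mul_div_cancel₀ _ hpos.ne']
    exact congrArg (pr μ) (funext fun ω => propext (by tauto))

lemma seqPosterior_pos (h : IsChannelOutput μ p Y Yq) (hp0 : ∀ k ∈ Keven q, 0 ≤ p k)
    (hlen : ∀ ω, (Yq ω).length = (Y ω).length) {ω : Ω} (hω : 0 < μ.p ω) :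
    0 < seqPosterior p (Y ω) (Yq ω) := by
  obtain ⟨n, hn⟩ : ∃ n, (Y ω).length = n := ⟨_, rfl⟩
  obtain ⟨a, ha⟩ := exists_ofFn_eq_of_length_eq hn
  obtain ⟨b, hb⟩ := exists_ofFn_eq_of_length_eq ((hlen ω).trans hn)
  have hjoint : 0 < pr μ (fun ω => Y ω = List.ofFn a ∧ Yq ω = List.ofFn b) :=
    hω.trans_le (FinProb.le_pr ⟨ha.symm, hb.symm⟩)
  rw [h] at hjoint
  rw [← ha, ← hb, seqPosterior_ofFn]
  exact Finset.prod_pos fun i _ =>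
    posterior_pos_of_prod_pos hp0 (pos_of_mul_pos_right hjoint (μ.pr_nonneg _)) i

lemma sum_pr_and_mul_neg_logb_seqPosterior (h : IsChannelOutput μ p Y Yq)
    (hp0 : ∀ k ∈ Keven q, 0 ≤ p k) (hp1 : ∑ k ∈ Keven q, p k = 1)
    (hlen : ∀ ω, (Yq ω).length = (Y ω).length) {s : Finset (List (Keven q))}
    (hs : ∀ ω, Yq ω ∈ s) {n : ℕ} (a : Fin n → pmOne) :
    ∑ v ∈ s, pr μ (fun ω => Y ω = List.ofFn a ∧ Yq ω = v) *
        -Real.logb 2 (seqPosterior p (List.ofFn a) v) =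
      pr μ (fun ω => Y ω = List.ofFn a) * (n * equivocation q p) := by
  set f : List (Keven q) → ℝ := fun v =>
    pr μ (fun ω => Y ω = List.ofFn a ∧ Yq ω = v) * -Real.logb 2 (seqPosterior p (List.ofFn a) v)
  calc ∑ v ∈ s, f v
      = ∑ v ∈ s with v.length = n, f v := by
        refine (Finset.sum_filter_of_ne fun v _ hne => ?_).symm
        obtain ⟨ω, -, hY, hv⟩ := FinProb.exists_pos_of_pr_pos
          ((μ.pr_nonneg _).lt_of_ne (left_ne_zero_of_mul hne).symm)
        rw [← hv, hlen ω, hY, List.length_ofFn]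
    _ = ∑ v ∈ (Finset.univ : Finset (Fin n → Keven q)).image List.ofFn, f v := by
        refine Finset.sum_subset (fun v hv => ?_) fun v hv hnot => ?_
        · obtain ⟨b, rfl⟩ := exists_ofFn_eq_of_length_eq (Finset.mem_filter.1 hv).2
          exact Finset.mem_image_of_mem _ (Finset.mem_univ b)
        · obtain ⟨b, -, rfl⟩ := Finset.mem_image.1 hv
          have hout : ∀ ω, Yq ω ≠ List.ofFn b := fun ω he =>
            hnot <| Finset.mem_filter.2 ⟨he ▸ hs ω, List.length_ofFn⟩
          simp only [f, μ.pr_eq_zero (E := fun ω => Y ω = List.ofFn a ∧ Yq ω = List.ofFn b)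
            fun ω hω => hout ω hω.2, zero_mul]
    _ = ∑ b : Fin n → Keven q, f (List.ofFn b) :=
        Finset.sum_image fun _ _ _ _ he => List.ofFn_injective he
    _ = pr μ (fun ω => Y ω = List.ofFn a) * ∑ b : Fin n → Keven q, (∏ i, p (b i * a i)) *
          -Real.logb 2 (seqPosterior p (List.ofFn a) (List.ofFn b)) := by
        simp only [f, h n a, mul_assoc, Finset.mul_sum]
    _ = _ := by rw [sum_prod_mul_neg_logb_seqPosterior hp0 hp1 a]

lemma sum_mul_neg_logb_seqPosterior (h : IsChannelOutput μ p Y Yq)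
    (hp0 : ∀ k ∈ Keven q, 0 ≤ p k) (hp1 : ∑ k ∈ Keven q, p k = 1)
    (hlen : ∀ ω, (Yq ω).length = (Y ω).length) :
    ∑ ω, μ.p ω * -Real.logb 2 (seqPosterior p (Y ω) (Yq ω)) = expLen μ Y * equivocation q p := by
  rw [← μ.sum_sum_pr_mul Y Yq fun y v => -Real.logb 2 (seqPosterior p y v), expLen,
    Finset.sum_mul]
  simp only [mul_assoc]
  rw [← μ.sum_pr_mul Y fun y => (y.length : ℝ) * _]
  refine Finset.sum_congr rfl fun y _ => ?_
  obtain ⟨n, hn⟩ : ∃ n, y.length = n := ⟨_, rfl⟩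
  obtain ⟨a, rfl⟩ := exists_ofFn_eq_of_length_eq hn
  rw [List.length_ofFn]
  exact h.sum_pr_and_mul_neg_logb_seqPosterior hp0 hp1 hlen (fun ω => by simp) a

end IsChannelOutput

theorem stmt17_general {Ω S : Type*} [Fintype Ω] (μ : FinProb Ω)
    (q : ℕ) (p : ℤ → ℝ)
    (hp0 : ∀ k ∈ Keven q, 0 ≤ p k) (hp1 : ∑ k ∈ Keven q, p k = 1)
    (X : Ω → S) (Y : Ω → List pmOne) (Yq : Ω → List (Keven q))
    (hlen : ∀ ω, (Yq ω).length = (Y ω).length)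
    (hcond : ∀ (x : S) (n : ℕ) (y : Fin n → pmOne) (y' : Fin n → Keven q),
      0 < pr μ (fun ω => X ω = x ∧ Y ω = List.ofFn y) →
      pr μ (fun ω => Yq ω = List.ofFn y' ∧ X ω = x ∧ Y ω = List.ofFn y) /
        pr μ (fun ω => X ω = x ∧ Y ω = List.ofFn y) = ∏ i, p ((y' i : ℤ) * (y i : ℤ))) :
    mutualInfo μ X Yq ≥ mutualInfo μ X Y -
      expLen μ Y * ((-∑ k ∈ Keven q, p k * Real.logb 2 (p k)) +
        Real.logb 2 (∑ k ∈ Finset.Icc (1 : ℤ) ((q / 2 : ℕ) : ℤ), (p k + p (-k)) ^ 2)) := by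
  have hchannel : IsChannelOutput μ p Y Yq := .of_cond hcond
  have hcondEntropy := μ.condEntropy_le_condEntropy_add X Y Yq
    (seqPosterior_nonneg hp0) (sum_seqPosterior_le_one hp0 _)
    (fun _ hω => hchannel.seqPosterior_pos hp0 hlen hω)
  rw [hchannel.sum_mul_neg_logb_seqPosterior hp0 hp1 hlen] at hcondEntropy
  have hexpLen : 0 ≤ expLen μ Y :=
    Finset.sum_nonneg fun ω _ => mul_nonneg (μ.nonneg ω) (Nat.cast_nonneg _)
  have hjensen := mul_le_mul_of_nonneg_left (equivocation_le hp0 hp1) hexpLen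
  rw [mutualInfo, mutualInfo]
  linarith

/-- for the binary input symmetric `q`-ary output kernel `W(b,k) = p (k·b)`
(even `q ≥ 2`),
`I(X;Y⁽q⁾) ≥ I(X;Y) − E[|Y|]·[H(p_{−q/2},…,p_{−1},p_1,…,p_{q/2}) + log₂(∑_{k=1}^{q/2}(p_k+p_{−k})²)]`. -/
theorem stmt17 {Ω S : Type*} [Fintype Ω] (μ : FinProb Ω)
    (q : ℕ) (hq : Even q) (hq2 : 2 ≤ q) (p : ℤ → ℝ)
    (hp0 : ∀ k ∈ Keven q, 0 ≤ p k) (hp1 : ∑ k ∈ Keven q, p k = 1)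
    (X : Ω → S) (Y : Ω → List pmOne) (Yq : Ω → List (Keven q))
    (hlen : ∀ ω, (Yq ω).length = (Y ω).length)
    (hcond : ∀ (x : S) (n : ℕ) (y : Fin n → pmOne) (y' : Fin n → Keven q),
      0 < pr μ (fun ω => X ω = x ∧ Y ω = List.ofFn y) →
      pr μ (fun ω => Yq ω = List.ofFn y' ∧ X ω = x ∧ Y ω = List.ofFn y) /
        pr μ (fun ω => X ω = x ∧ Y ω = List.ofFn y) = ∏ i, p ((y' i : ℤ) * (y i : ℤ))) :
    mutualInfo μ X Yq ≥ mutualInfo μ X Y -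
      expLen μ Y * ((-∑ k ∈ Keven q, p k * Real.logb 2 (p k)) +
        Real.logb 2 (∑ k ∈ Finset.Icc (1 : ℤ) ((q / 2 : ℕ) : ℤ), (p k + p (-k)) ^ 2)) :=
  stmt17_general μ q p hp0 hp1 X Y Yq hlen hcond
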